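/- arXiv:1412.6294 — 7 statements merged into one kernel-verified Lean document; each statement's English description precedes it below -/
import Mathlib

section
/- For every real number s with 0 < s ≤ 1/π, one has (π/2)·∫₀^s dτ/(1−2δ_τ) < (1/2)·arcsin(π s). -/
open MeasureTheory

/-- `δ_τ = τ · tan((1/2)·arctan(2τ))`. -/
noncomputable def delta (t : ℝ) : ℝ := t * Real.tan ((1/2) * Real.arctan (2*t))

lemma one_sub_two_delta (t : ℝ) : 1 - 2 * delta t = 2 - Real.sqrt (1 + 4 * t ^ 2) := by
  have hθ := Real.arctan_mem_Ioo (2 * t)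
  set θ := Real.arctan (2 * t) with hθdef
  have hπ := Real.pi_pos
  have hc : 0 < Real.cos (θ / 2) := by
    apply Real.cos_pos_of_mem_Ioo
    constructor <;> [nlinarith [hθ.1]; nlinarith [hθ.2]]
  have htan : Real.tan (θ / 2) = Real.sin θ / (1 + Real.cos θ) := by
    have h1 : Real.sin θ = 2 * Real.sin (θ / 2) * Real.cos (θ / 2) := by
      rw [← Real.sin_two_mul]; ring_nf
    have h2 : 1 + Real.cos θ = 2 * Real.cos (θ / 2) ^ 2 := by
      have := Real.cos_two_mul (θ / 2)
      have h3 : Real.cos θ = 2 * Real.cos (θ / 2) ^ 2 - 1 := by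
        rw [← this]; ring_nf
      linarith
    rw [h1, h2, Real.tan_eq_sin_div_cos]
    field_simp
  have hsin : Real.sin θ = 2 * t / Real.sqrt (1 + (2 * t) ^ 2) := Real.sin_arctan (2 * t)
  have hcos : Real.cos θ = 1 / Real.sqrt (1 + (2 * t) ^ 2) := Real.cos_arctan (2 * t)
  have hsq : (1 : ℝ) + (2 * t) ^ 2 = 1 + 4 * t ^ 2 := by ring
  have hpos : (0 : ℝ) < 1 + 4 * t ^ 2 := by positivity
  set r := Real.sqrt (1 + 4 * t ^ 2) with hr
  have hr1 : 1 ≤ r := by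
    rw [hr]; nlinarith [Real.sq_sqrt hpos.le, Real.sqrt_nonneg (1 + 4 * t ^ 2),
      Real.one_le_sqrt.mpr (by nlinarith : (1:ℝ) ≤ 1 + 4 * t ^ 2)]
  have hrpos : 0 < r := lt_of_lt_of_le one_pos hr1
  have hrsq : r ^ 2 = 1 + 4 * t ^ 2 := Real.sq_sqrt hpos.le
  have hdelta : delta t = (r - 1) / 2 := by
    unfold delta
    rw [show (1/2 : ℝ) * θ = θ / 2 by ring, htan, hsin, hcos, hsq, ← hr]
    have h5 : 2 * t / r / (1 + 1 / r) = 2 * t / (r + 1) := by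
      rw [div_div]
      congr 1
      field_simp
    rw [h5]
    have hrne : r + 1 ≠ 0 := by positivity
    field_simp
    nlinarith [hrsq]
  rw [hdelta]; ring

lemma key_ineq (t : ℝ) (ht : 0 < t) (ht' : Real.pi * t ≤ 1) :
    Real.sqrt (1 + 4 * t ^ 2) + Real.sqrt (1 - (Real.pi * t) ^ 2) < 2 := by
  have hpi := Real.pi_gt_three
  set a := Real.sqrt (1 + 4 * t ^ 2) with ha
  set b := Real.sqrt (1 - (Real.pi * t) ^ 2) with hb
  have hbnn : (0:ℝ) ≤ 1 - (Real.pi * t) ^ 2 := by nlinarith [mul_pos Real.pi_pos ht]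
  have ha2 : a ^ 2 = 1 + 4 * t ^ 2 := Real.sq_sqrt (by positivity)
  have hb2 : b ^ 2 = 1 - (Real.pi * t) ^ 2 := Real.sq_sqrt hbnn
  have hann : 0 ≤ a := Real.sqrt_nonneg _
  have hbnn' : 0 ≤ b := Real.sqrt_nonneg _
  have habsq : (2*a*b)^2 = 4*((1+4*t^2)*(1-(Real.pi*t)^2)) := by
    rw [mul_pow, mul_pow, ha2, hb2]; ring
  have hR : 0 < 2 + (Real.pi^2 - 4) * t^2 := by nlinarith [sq_nonneg t]
  have hdiff : (2*a*b)^2 < (2 + (Real.pi^2 - 4) * t^2)^2 := by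
    rw [habsq]
    have h1 : 0 < (Real.pi^2 - 4) * t^2 := mul_pos (by nlinarith) (pow_pos ht 2)
    nlinarith [h1, sq_nonneg ((Real.pi^2-4)*t^2),
      mul_pos (mul_pos Real.pi_pos Real.pi_pos) (pow_pos ht 4)]
  have hab2 : 2*a*b < 2 + (Real.pi^2 - 4) * t^2 := by
    nlinarith [mul_nonneg hann hbnn', hR, hdiff]
  nlinarith [hab2, ha2, hb2, hann, hbnn']

lemma contA : Continuous fun t : ℝ => 2 - Real.sqrt (1 + 4 * t ^ 2) :=
  continuous_const.sub (Real.continuous_sqrt.comp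
    (continuous_const.add (continuous_const.mul (continuous_pow 2))))

lemma contB : Continuous fun t : ℝ => Real.sqrt (1 - (Real.pi * t) ^ 2) :=
  Real.continuous_sqrt.comp
    (continuous_const.sub ((continuous_const.mul continuous_id).pow 2))

theorem integral_bound_lt_arcsin_bound (s : ℝ) (hs : 0 < s) (hs' : s ≤ 1/Real.pi) :
    (Real.pi/2) * (∫ τ in (0:ℝ)..s, 1/(1 - 2 * delta τ)) <
      (1/2) * Real.arcsin (Real.pi * s) := by
  have hpi := Real.pi_gt_three
  have hpipos := Real.pi_pos
  have hπs : Real.pi * s ≤ 1 := by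
    rw [le_div_iff₀ hpipos] at hs'; linarith
  -- rewrite the integrand
  have hcong : ∫ τ in (0:ℝ)..s, 1/(1 - 2 * delta τ)
      = ∫ τ in (0:ℝ)..s, 1/(2 - Real.sqrt (1 + 4 * τ ^ 2)) := by
    apply intervalIntegral.integral_congr
    intro τ _
    show (1:ℝ)/(1 - 2 * delta τ) = 1/(2 - Real.sqrt (1 + 4 * τ ^ 2))
    rw [one_sub_two_delta]
  rw [hcong]
  -- positivity of denominator on [0,s]
  have hden : ∀ τ : ℝ, τ ∈ Set.Icc (0:ℝ) s → 0 < 2 - Real.sqrt (1 + 4 * τ ^ 2) := by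
    intro τ hτ
    have hπτ : Real.pi * τ ≤ 1 := by
      calc Real.pi * τ ≤ Real.pi * s := by nlinarith [hτ.2]
      _ ≤ 1 := hπs
    have h3 : 3 * τ ≤ 1 := by nlinarith [hτ.1, hπτ]
    have h1 : 1 + 4 * τ ^ 2 < 4 := by nlinarith [hτ.1, h3]
    have := Real.sqrt_lt_sqrt (by positivity) h1
    have h4 : Real.sqrt 4 = 2 := by
      rw [show (4:ℝ) = 2 ^ 2 by norm_num, Real.sqrt_sq (by norm_num : (0:ℝ) ≤ 2)]
    linarith [h4 ▸ this]
  rcases lt_or_eq_of_le hπs with hlt | heq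
  · -- case π s < 1 : pointwise comparison with 1/√(1-(πτ)²)
    have harcsin : Real.arcsin (Real.pi * s)
        = ∫ τ in (0:ℝ)..s, Real.pi / Real.sqrt (1 - (Real.pi * τ) ^ 2) := by
      have : ∫ τ in (0:ℝ)..s, Real.pi / Real.sqrt (1 - (Real.pi * τ) ^ 2)
          = Real.arcsin (Real.pi * s) - Real.arcsin (Real.pi * 0) := by
        apply intervalIntegral.integral_eq_sub_of_hasDerivAt
          (f := fun τ : ℝ => Real.arcsin (Real.pi * τ))
        · intro τ hτ
          rw [Set.uIcc_of_le hs.le] at hτ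
          have h1 : Real.pi * τ ≠ -1 := by nlinarith [hτ.1]
          have h2 : Real.pi * τ ≠ 1 := by
            have : Real.pi * τ ≤ Real.pi * s := by nlinarith [hτ.2]
            linarith
          have hinner : HasDerivAt (fun x : ℝ => Real.pi * x) Real.pi τ := by
            simpa using (hasDerivAt_id τ).const_mul Real.pi
          have hcomp := (Real.hasDerivAt_arcsin h1 h2).comp τ hinner
          have hval : Real.pi / Real.sqrt (1 - (Real.pi * τ) ^ 2)
              = 1 / Real.sqrt (1 - (Real.pi * τ) ^ 2) * Real.pi := by ring
          rw [hval]
          exact hcomp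
        · apply ContinuousOn.intervalIntegrable
          apply ContinuousOn.div continuousOn_const
          · exact contB.continuousOn
          · intro τ hτ
            rw [Set.uIcc_of_le hs.le] at hτ
            have h2 : Real.pi * τ < 1 := by
              have : Real.pi * τ ≤ Real.pi * s := by nlinarith [hτ.2]
              linarith
            have hnn : (0:ℝ) < 1 - (Real.pi * τ) ^ 2 := by
              nlinarith [mul_nonneg (mul_nonneg hpipos.le hτ.1) (sub_nonneg.mpr h2.le)]
            positivity
      simpa using this.symm
    rw [harcsin]
    rw [← intervalIntegral.integral_const_mul, ← intervalIntegral.integral_const_mul]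
    apply intervalIntegral.integral_lt_integral_of_continuousOn_of_le_of_exists_lt hs
    · -- continuity of LHS
      apply ContinuousOn.mul continuousOn_const
      apply ContinuousOn.div continuousOn_const
      · exact contA.continuousOn
      · intro τ hτ; exact (hden τ hτ).ne'
    · apply ContinuousOn.mul continuousOn_const
      apply ContinuousOn.div continuousOn_const
      · exact contB.continuousOn
      · intro τ hτ
        have h2 : Real.pi * τ < 1 := by nlinarith [hτ.2]
        have hnn : (0:ℝ) < 1 - (Real.pi * τ) ^ 2 := by
          nlinarith [mul_nonneg (mul_nonneg hpipos.le hτ.1) (sub_nonneg.mpr h2.le)]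
        positivity
    · intro τ hτ
      have hd := hden τ (Set.mem_Icc.mpr ⟨hτ.1.le, hτ.2⟩)
      have h2 : Real.pi * τ < 1 := by nlinarith [hτ.2]
      have hnn : (0:ℝ) < 1 - (Real.pi * τ) ^ 2 := by
        nlinarith [mul_nonneg (mul_nonneg hpipos.le hτ.1.le) (sub_nonneg.mpr h2.le)]
      have hb0 : 0 < Real.sqrt (1 - (Real.pi * τ) ^ 2) := Real.sqrt_pos.mpr hnn
      have hkey := key_ineq τ hτ.1 h2.le
      have hble : Real.sqrt (1 - (Real.pi * τ) ^ 2) ≤ 2 - Real.sqrt (1 + 4 * τ ^ 2) := by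
        linarith
      have h1d : (1:ℝ)/(2 - Real.sqrt (1 + 4 * τ ^ 2))
          ≤ 1/Real.sqrt (1 - (Real.pi * τ) ^ 2) := one_div_le_one_div_of_le hb0 hble
      calc Real.pi/2 * (1/(2 - Real.sqrt (1 + 4 * τ ^ 2)))
          ≤ Real.pi/2 * (1/Real.sqrt (1 - (Real.pi * τ) ^ 2)) :=
            mul_le_mul_of_nonneg_left h1d (by positivity)
        _ = 1/2 * (Real.pi/Real.sqrt (1 - (Real.pi * τ) ^ 2)) := by ring
    · refine ⟨s, Set.right_mem_Icc.mpr hs.le, ?_⟩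
      have hd := hden s (Set.right_mem_Icc.mpr hs.le)
      have hkey := key_ineq s hs hπs
      have hnn : (0:ℝ) < 1 - (Real.pi * s) ^ 2 := by
        nlinarith [mul_nonneg (mul_nonneg hpipos.le hs.le) (sub_nonneg.mpr hlt.le)]
      have hb0 : 0 < Real.sqrt (1 - (Real.pi * s) ^ 2) := Real.sqrt_pos.mpr hnn
      have hble : Real.sqrt (1 - (Real.pi * s) ^ 2) < 2 - Real.sqrt (1 + 4 * s ^ 2) := by
        linarith
      have h1d : (1:ℝ)/(2 - Real.sqrt (1 + 4 * s ^ 2))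
          < 1/Real.sqrt (1 - (Real.pi * s) ^ 2) :=
        one_div_lt_one_div_of_lt hb0 hble
      calc Real.pi/2 * (1/(2 - Real.sqrt (1 + 4 * s ^ 2)))
          < Real.pi/2 * (1/Real.sqrt (1 - (Real.pi * s) ^ 2)) :=
            mul_lt_mul_of_pos_left h1d (by positivity)
        _ = 1/2 * (Real.pi/Real.sqrt (1 - (Real.pi * s) ^ 2)) := by ring
  · -- case π s = 1 : crude bound
    have hseq : s = 1 / Real.pi := by field_simp at heq ⊢; linarith
    set c := 2 - Real.sqrt (1 + 4 * s ^ 2) with hc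
    have hcpos : 0 < c := hden s (Set.right_mem_Icc.mpr hs.le)
    have hbound : ∫ τ in (0:ℝ)..s, 1/(2 - Real.sqrt (1 + 4 * τ ^ 2)) ≤ s * (1 / c) := by
      have : ∫ τ in (0:ℝ)..s, 1/(2 - Real.sqrt (1 + 4 * τ ^ 2))
          ≤ ∫ _ in (0:ℝ)..s, 1 / c := by
        apply intervalIntegral.integral_mono_on hs.le
        · apply ContinuousOn.intervalIntegrable
          rw [Set.uIcc_of_le hs.le]
          apply ContinuousOn.div continuousOn_const
          · exact contA.continuousOn
          · intro τ hτ; exact (hden τ hτ).ne'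
        · exact intervalIntegrable_const
        · intro τ hτ
          have hd := hden τ hτ
          apply div_le_div_of_nonneg_left one_pos.le hcpos
          have : Real.sqrt (1 + 4 * τ ^ 2) ≤ Real.sqrt (1 + 4 * s ^ 2) := by
            apply Real.sqrt_le_sqrt
            nlinarith [hτ.1, hτ.2]
          rw [hc]; linarith
      simpa using this
    have harcsin1 : Real.arcsin (Real.pi * s) = Real.pi / 2 := by
      rw [heq, Real.arcsin_one]
    rw [harcsin1]
    -- need (π/2) * (s * (1/c)) < (1/2)*(π/2), i.e. π s / c < π/2, with s = 1/π: 1/c < π/2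
    have hc2 : 2 < Real.pi * c := by
      -- c = 2 - √(1+4/π²); need 2π - 2 > √(π²+4) scaled... show π c > 2
      have hs2 : s ^ 2 = 1 / Real.pi ^ 2 := by rw [hseq]; ring
      have hsq : Real.sqrt (1 + 4 * s ^ 2) < 2 - 2 / Real.pi := by
        rw [show (2:ℝ) - 2 / Real.pi = Real.sqrt ((2 - 2/Real.pi)^2) from
          (Real.sqrt_sq (by have h := (div_lt_one hpipos).mpr (by linarith : (2:ℝ) < Real.pi); linarith : (0:ℝ) ≤ 2 - 2/Real.pi)).symm]
        apply Real.sqrt_lt_sqrt (by positivity)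
        rw [hs2]
        have : (2 - 2/Real.pi)^2 = 4 - 8/Real.pi + 4/Real.pi^2 := by ring
        rw [this]
        have h1 : 8 / Real.pi < 3 := by
          rw [div_lt_iff₀ hpipos]; linarith
        have h2 : (0:ℝ) < 4 / Real.pi ^ 2 := by positivity
        have h3 : 4 * (1 / Real.pi ^ 2) = 4 / Real.pi ^ 2 := by ring
        linarith
      have : c > 2 / Real.pi := by rw [hc]; linarith
      calc 2 = Real.pi * (2 / Real.pi) := by field_simp
      _ < Real.pi * c := by exact mul_lt_mul_of_pos_left this hpipos
    calc (Real.pi/2) * (∫ τ in (0:ℝ)..s, 1/(2 - Real.sqrt (1 + 4 * τ ^ 2)))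
        ≤ (Real.pi/2) * (s * (1/c)) := by
          apply mul_le_mul_of_nonneg_left hbound (by positivity)
      _ < (1/2) * (Real.pi/2) := by
          rw [hseq]
          have hcne : c ≠ 0 := hcpos.ne'
          have h1 : (Real.pi/2) * (1/Real.pi * (1/c)) = 1/(2*c) := by
            field_simp
          rw [h1, div_lt_iff₀ (by positivity : (0:ℝ) < 2 * c)]
          nlinarith [hc2, hcpos]
end

section
/- For every real number r with 0 < r < √3/2 there exists ε > 0 with ε ≤ (1−2δ_r)/π and r + ε < √3/2 such that for all s with r < s ≤ r + ε one has (1/2)·arcsin(π·(s−r)/(1−2δ_r)) < (π/2)·∫_r^s dτ/(1−2δ_τ). -/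
/-!
Write `c = 1 - 2δ_r = 2 - √(1 + 4r²)`. Both sides vanish at `s = r` and have the same linear part
`(π/2)(s - r)/c`. Since `τ ↦ 1/(1 - 2δ_τ)` increases with slope at least `2r/c²` to the right of `r`,
the integral gains a quadratic term `π r (s - r)²/(2c²)`, whereas `arcsin x ≤ x + x³` shows that the
arcsin side exceeds its linear part only at third order in `s - r`.
-/

open MeasureTheory

open Real Set

theorem Real.tan_half_eq_sin_div_one_add_cos {x : ℝ} (hx : cos (x / 2) ≠ 0) :
    tan (x / 2) = sin x / (1 + cos x) := by
  have hsin : sin x = 2 * sin (x / 2) * cos (x / 2) := by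
    rw [← sin_two_mul, mul_div_cancel₀ x two_ne_zero]
  have hcos : 1 + cos x = 2 * cos (x / 2) ^ 2 := by
    rw [cos_sq, mul_div_cancel₀ x two_ne_zero]
    ring
  rw [tan_eq_sin_div_cos, hsin, hcos]
  field_simp

theorem one_sub_two_mul_delta (t : ℝ) : 1 - 2 * delta t = 2 - √(1 + 4 * t ^ 2) := by
  have hcos : cos (arctan (2 * t) / 2) ≠ 0 := by
    obtain ⟨hlo, hhi⟩ := arctan_mem_Ioo (2 * t)
    exact (cos_pos_of_mem_Ioo ⟨by linarith, by linarith⟩).ne'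
  have hS : √(1 + (2 * t) ^ 2) ^ 2 = 1 + (2 * t) ^ 2 := sq_sqrt (by positivity)
  have hS₀ : 0 < √(1 + (2 * t) ^ 2) := sqrt_pos.2 (by positivity)
  rw [delta, one_div_mul_eq_div, tan_half_eq_sin_div_one_add_cos hcos, sin_arctan, cos_arctan,
    show (4 : ℝ) * t ^ 2 = (2 * t) ^ 2 by ring]
  generalize √(1 + (2 * t) ^ 2) = S at hS hS₀ ⊢
  field_simp
  nlinarith

theorem one_sub_two_mul_delta_pos {t : ℝ} (ht : |t| < √3 / 2) : 0 < 1 - 2 * delta t := by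
  have h3 : √3 ^ 2 = 3 := sq_sqrt (by norm_num)
  have ht2 : 4 * t ^ 2 < 3 := by nlinarith [sq_abs t, abs_nonneg t]
  rw [one_sub_two_mul_delta, sub_pos, sqrt_lt' two_pos]
  linarith

theorem one_sub_two_mul_delta_add_le {r τ : ℝ} (hr : 0 ≤ r) (hrτ : r ≤ τ) (hτ : τ < √3 / 2) :
    1 - 2 * delta τ + 2 * r * (τ - r) ≤ 1 - 2 * delta r := by
  have hpos := one_sub_two_mul_delta_pos (t := τ) (by rwa [abs_of_nonneg (hr.trans hrτ)])
  simp only [one_sub_two_mul_delta] at hpos ⊢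
  have hA := sq_sqrt (show 0 ≤ 1 + 4 * r ^ 2 by positivity)
  have hB := sq_sqrt (show 0 ≤ 1 + 4 * τ ^ 2 by positivity)
  have hAB : √(1 + 4 * r ^ 2) ≤ √(1 + 4 * τ ^ 2) := sqrt_le_sqrt (by nlinarith)
  -- `√b - √a = (b - a) / (√a + √b)`, where `b - a = 4(τ² - r²) ≥ 8r(τ - r)` and `√a + √b < 4`
  nlinarith [mul_nonneg (sub_nonneg.2 hAB)
    (show 0 ≤ 4 - √(1 + 4 * r ^ 2) - √(1 + 4 * τ ^ 2) by linarith)]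

theorem one_div_add_div_sq_le_one_div {x y d : ℝ} (hy : 0 < y) (hd : 0 ≤ d) (h : y + d ≤ x) :
    1 / x + d / x ^ 2 ≤ 1 / y := by
  have hx : 0 < x := by linarith
  rw [div_add_div _ _ hx.ne' (by positivity), div_le_div_iff₀ (by positivity) hy]
  have hyx : 0 ≤ x - y := by linarith
  have he : 0 ≤ x - y - d := by linarith
  nlinarith [mul_nonneg (mul_nonneg hd hyx) hx.le, mul_nonneg (mul_nonneg hx.le he) hx.le]

theorem arcsin_le_add_cube {x : ℝ} (hx₀ : 0 < x) (hx₁ : x ≤ 1 / 2) :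
    arcsin x ≤ x + x ^ 3 := by
  have hπ : 5 / 8 < π / 2 := by linarith [pi_gt_three]
  have hx3 : x ^ 3 ≤ 1 / 8 := by nlinarith [pow_le_pow_left₀ hx₀.le hx₁ 3]
  rw [arcsin_le_iff_le_sin' ⟨by linarith [pi_pos, pow_pos hx₀ 3], by linarith⟩]
  have hcube : (x + x ^ 3) ^ 3 ≤ 6 * x ^ 3 := by
    have h : (1 + x ^ 2) ^ 3 ≤ 6 := by
      nlinarith [pow_le_pow_left₀ (by positivity) (show 1 + x ^ 2 ≤ 5 / 4 by nlinarith) 3]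
    calc (x + x ^ 3) ^ 3 = x ^ 3 * (1 + x ^ 2) ^ 3 := by ring
      _ ≤ x ^ 3 * 6 := by gcongr
      _ = 6 * x ^ 3 := by ring
  linarith [sin_gt_sub_cube (show 0 < x + x ^ 3 by positivity)]

theorem intervalIntegral.le_integral_of_affine_le {f : ℝ → ℝ} {a b r s : ℝ} (hrs : r ≤ s)
    (hf : IntervalIntegrable f volume r s) (h : ∀ τ ∈ Icc r s, a + b * (τ - r) ≤ f τ) :
    a * (s - r) + b * (s - r) ^ 2 / 2 ≤ ∫ τ in r..s, f τ := by
  have haff : IntervalIntegrable (fun τ => a + b * (τ - r)) volume r s :=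
    Continuous.intervalIntegrable (by fun_prop) r s
  calc a * (s - r) + b * (s - r) ^ 2 / 2 = ∫ τ in r..s, (a + b * (τ - r)) := by
        rw [integral_comp_sub_right (fun τ => a + b * τ),
          integral_add intervalIntegrable_const (intervalIntegrable_id.const_mul b),
          integral_const_mul]
        simp
        ring
    _ ≤ ∫ τ in r..s, f τ := integral_mono_on hrs haff hf h

theorem affine_le_integral_one_div_one_sub_two_mul_delta {r s : ℝ} (hr : 0 ≤ r) (hrs : r ≤ s)
    (hs : s < √3 / 2) :
    1 / (1 - 2 * delta r) * (s - r) + 2 * r / (1 - 2 * delta r) ^ 2 * (s - r) ^ 2 / 2 ≤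
      ∫ τ in r..s, 1 / (1 - 2 * delta τ) := by
  have hpos : ∀ τ ∈ Icc r s, 0 < 1 - 2 * delta τ := fun τ hτ =>
    one_sub_two_mul_delta_pos (by rw [abs_of_nonneg (hr.trans hτ.1)]; linarith [hτ.2])
  refine intervalIntegral.le_integral_of_affine_le hrs ?_ fun τ hτ => ?_
  · refine ContinuousOn.intervalIntegrable ?_
    simp_rw [one_sub_two_mul_delta] at hpos ⊢
    rw [uIcc_of_le hrs]
    exact continuousOn_const.div (by fun_prop) fun τ hτ => (hpos τ hτ).ne'
  · calc 1 / (1 - 2 * delta r) + 2 * r / (1 - 2 * delta r) ^ 2 * (τ - r)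
        = 1 / (1 - 2 * delta r) + 2 * r * (τ - r) / (1 - 2 * delta r) ^ 2 := by ring
      _ ≤ 1 / (1 - 2 * delta τ) :=
        one_div_add_div_sq_le_one_div (hpos τ hτ) (by nlinarith [hτ.1])
          (one_sub_two_mul_delta_add_le hr hτ.1 (hτ.2.trans_lt hs))

theorem arcsin_bound_locally_beats_integral_bound (r : ℝ) (hr : 0 < r)
    (hr' : r < Real.sqrt 3 / 2) :
    ∃ ε > 0, ε ≤ (1 - 2 * delta r) / Real.pi ∧ r + ε < Real.sqrt 3 / 2 ∧
      ∀ s, r < s → s ≤ r + ε →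
        (1/2) * Real.arcsin (Real.pi * (s - r) / (1 - 2 * delta r)) <
          (Real.pi/2) * (∫ τ in r..s, 1/(1 - 2 * delta τ)) := by
  set c := 1 - 2 * delta r
  have hc : 0 < c := one_sub_two_mul_delta_pos (by rwa [abs_of_pos hr])
  obtain ⟨ε, hε, hε_room, hε_half, hε_small⟩ : ∃ ε > 0,
      r + ε < √3 / 2 ∧ ε ≤ c / (2 * π) ∧ ε ≤ r * c / (2 * π ^ 2) := by
    refine ⟨min ((√3 / 2 - r) / 2) (min (c / (2 * π)) (r * c / (2 * π ^ 2))), by positivity, ?_,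
      (min_le_right _ _).trans (min_le_left _ _), (min_le_right _ _).trans (min_le_right _ _)⟩
    linarith [min_le_left ((√3 / 2 - r) / 2) (min (c / (2 * π)) (r * c / (2 * π ^ 2)))]
  have hε_le : ε ≤ c / π := hε_half.trans (div_le_div_of_nonneg_left hc.le pi_pos (by linarith [pi_pos]))
  refine ⟨ε, hε, hε_le, hε_room, fun s hrs hsε => ?_⟩
  set x := π * (s - r) / c
  have hx : 0 < x := by positivity
  have hx_le : x ≤ π * ε / c := by simp only [x]; gcongr; linarith
  have hx_half : x ≤ 1 / 2 :=
    calc x ≤ π * (c / (2 * π)) / c := hx_le.trans (by gcongr)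
      _ = 1 / 2 := by field_simp
  have hx_small : x < r / π :=
    calc x ≤ π * (r * c / (2 * π ^ 2)) / c := hx_le.trans (by gcongr)
      _ = r / π / 2 := by field_simp
      _ < r / π := half_lt_self (by positivity)
  calc 1 / 2 * arcsin x ≤ 1 / 2 * (x + x * x ^ 2) := by
        gcongr
        exact (arcsin_le_add_cube hx hx_half).trans_eq (by ring)
    _ < 1 / 2 * (x + r / π * x ^ 2) := by gcongr
    _ = π / 2 * (1 / c * (s - r) + 2 * r / c ^ 2 * (s - r) ^ 2 / 2) := by
        simp only [x]
        field_simp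
    _ ≤ π / 2 * ∫ τ in r..s, 1 / (1 - 2 * delta τ) := by
        gcongr
        exact affine_le_integral_one_div_one_sub_two_mul_delta hr.le hrs.le (by linarith)
end

section
/- For every real number s with 0 < s ≤ 1/π, one has √(1 − π²s²) < 2 − √(1 + 4s²). -/
theorem sqrt_one_sub_pi_sq_lt (s : ℝ) (hs : 0 < s) (hs' : s ≤ 1/Real.pi) :
    Real.sqrt (1 - Real.pi^2 * s^2) < 2 - Real.sqrt (1 + 4*s^2) := by
  have hπ : (3:ℝ) < Real.pi := Real.pi_gt_three
  have hπ0 : (0:ℝ) < Real.pi := by linarith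
  have hsπ : Real.pi * s ≤ 1 := by
    have := (le_div_iff₀ hπ0).mp hs'
    linarith [this]
  have hsq : (Real.pi * s) * (Real.pi * s) ≤ 1 :=
    mul_le_one₀ hsπ (by positivity) hsπ
  have h1 : 0 ≤ 1 - Real.pi^2 * s^2 := by nlinarith [hsq]
  set A := Real.sqrt (1 - Real.pi^2 * s^2) with hAdef
  set B := Real.sqrt (1 + 4*s^2) with hBdef
  have hA0 : 0 ≤ A := Real.sqrt_nonneg _
  have hB0 : 0 ≤ B := Real.sqrt_nonneg _
  have hA2 : A^2 = 1 - Real.pi^2 * s^2 := Real.sq_sqrt h1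
  have hB2 : B^2 = 1 + 4*s^2 := Real.sq_sqrt (by positivity)
  have hABsq : (A*B)^2 = (1 - Real.pi^2 * s^2) * (1 + 4*s^2) := by
    rw [mul_pow, hA2, hB2]
  have hRpos : 0 < 2 + (Real.pi^2 - 4)*s^2 := by nlinarith
  have hkey : 2*(A*B) < 2 + (Real.pi^2 - 4)*s^2 := by
    have hsq2 : (2*(A*B))^2 < (2 + (Real.pi^2 - 4)*s^2)^2 := by
      have hπ2 : (4:ℝ) < Real.pi^2 := by nlinarith
      have hs2 : 0 < s^2 := by positivity
      nlinarith [hABsq, mul_pos (by linarith : (0:ℝ) < Real.pi^2 - 4) hs2,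
        sq_nonneg ((Real.pi^2 + 4) * s^2)]
    have h2AB : 0 ≤ 2*(A*B) := by positivity
    nlinarith [hsq2, h2AB, hRpos]
  have hsum : (A+B)^2 < 4 := by nlinarith [hkey, hA2, hB2]
  nlinarith [hsum, sq_nonneg (A+B-2), hA0, hB0]
end

section
/- For every real number r with 0 < r < √3/2 there exists ε > 0 such that for all s with r < s < r + ε one has (2 − √(1+4r²))² − π²(s−r)² > (2 − √(1+4s²))². -/
set_option maxHeartbeats 1600000 in
theorem local_inequality_right_of_r (r : ℝ) (hr : 0 < r) (hr' : r < Real.sqrt 3 / 2) :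
    ∃ ε > 0, ∀ s, r < s → s < r + ε →
      (2 - Real.sqrt (1 + 4*r^2))^2 - Real.pi^2 * (s - r)^2 >
        (2 - Real.sqrt (1 + 4*s^2))^2 := by
  set a := Real.sqrt (1 + 4*r^2) with ha_def
  have ha0 : (0:ℝ) ≤ 1 + 4*r^2 := by positivity
  have ha2 : a^2 = 1 + 4*r^2 := Real.sq_sqrt ha0
  have hann : 0 ≤ a := Real.sqrt_nonneg _
  have ha1 : 1 ≤ a := by nlinarith [ha2, hann, hr]
  have hr2 : r^2 < 3/4 := by
    have h3 : Real.sqrt 3 ^ 2 = 3 := Real.sq_sqrt (by norm_num)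
    nlinarith [hr, hr', Real.sqrt_nonneg 3]
  have ha_lt2 : a < 2 := by nlinarith [ha2, hann, hr2]
  clear_value a
  set c := 2 - a with hc_def
  have hc : 0 < c := by linarith
  refine ⟨min (min 1 (c / (4*(2*r+1)))) (3*r*c/10), by positivity, ?_⟩
  intro s hs1 hs2
  set b := Real.sqrt (1 + 4*s^2) with hb_def
  have hs0 : 0 < s := lt_trans hr hs1
  have hb0 : (0:ℝ) ≤ 1 + 4*s^2 := by positivity
  have hb2 : b^2 = 1 + 4*s^2 := Real.sq_sqrt hb0
  have hbnn : 0 ≤ b := Real.sqrt_nonneg _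
  have hb1 : 1 ≤ b := by nlinarith [hb2, hbnn, hs0]
  clear_value b
  have hδpos : 0 < s - r := by linarith
  have hδ1 : s - r < 1 := by
    have := min_le_left (min 1 (c / (4*(2*r+1)))) (3*r*c/10)
    have := min_le_left (1:ℝ) (c / (4*(2*r+1)))
    linarith
  have hδ2 : s - r < c / (4*(2*r+1)) := by
    have := min_le_left (min 1 (c / (4*(2*r+1)))) (3*r*c/10)
    have := min_le_right (1:ℝ) (c / (4*(2*r+1)))
    linarith
  have hδ3 : s - r < 3*r*c/10 := by
    have := min_le_right (min 1 (c / (4*(2*r+1)))) (3*r*c/10)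
    linarith
  clear_value c
  clear hs2 ha_def hb_def
  have hprod : (b - a) * (b + a) = 4*(s-r)*(s+r) := by
    linear_combination hb2 - ha2
  have hba_pos : 0 < b - a := by
    nlinarith [hprod, ha1, hb1, hδpos, hs0, hr]
  have hδ2' : (s - r) * (4*(2*r+1)) < c :=
    (lt_div_iff₀ (by positivity : (0:ℝ) < 4*(2*r+1))).mp hδ2
  have hb_small : b < a + c/2 := by
    have e1 : (b-a)*(b+a-2) ≥ 0 := mul_nonneg hba_pos.le (by linarith)
    have e2 : 4*(s-r)*(s+r) < 4*(s-r)*(2*r+1) :=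
      mul_lt_mul_of_pos_left (show s+r < 2*r+1 by linarith) (by linarith)
    nlinarith [hprod, hδ2', e1, e2]
  have h4 : a + b < 4 - 3*c/2 := by
    have : c = 2 - a := hc_def
    linarith
  have hba_lb : 2*r*(s-r) < b - a := by
    have e1 : (b-a)*(b+a) < (b-a)*4 :=
      mul_lt_mul_of_pos_left (by linarith) hba_pos
    have e2 : 4*(s-r)*(2*r) < 4*(s-r)*(s+r) :=
      mul_lt_mul_of_pos_left (by linarith) (by linarith)
    nlinarith [hprod, e1, e2]
  have hpi : Real.pi^2 < 10 := by
    nlinarith [Real.pi_lt_d2, Real.pi_pos]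
  have hkey : (b - a) * (4 - a - b) > 3*r*c*(s-r) := by
    nlinarith [mul_pos (show 0 < b - a - 2*r*(s-r) by linarith) (show (0:ℝ) < 4 - a - b by linarith),
      mul_pos (mul_pos (mul_pos two_pos hr) hδpos) (show (0:ℝ) < 4 - a - b - 3*c/2 by linarith),
      hr, hc, hδpos]
  have step1 : 10*(s-r)^2 < 3*r*c*(s-r) := by
    nlinarith [mul_lt_mul_of_pos_left hδ3 (show (0:ℝ) < 10*(s-r) by linarith)]
  have step2 : Real.pi^2*(s-r)^2 ≤ 10*(s-r)^2 :=
    mul_le_mul_of_nonneg_right (le_of_lt hpi) (sq_nonneg _)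
  have heq : c^2 - (2-b)^2 = (b-a)*(4-a-b) := by rw [hc_def]; ring
  linarith [hkey, step1, step2, heq]
end

section
/- For all real numbers r, s with 0 ≤ r < s < 1/2, setting λ := (s−r)/(1−2r), one has (π/2)·∫_r^s dτ/(1−2τ) = (π/2)·∫₀^λ dτ/(1−2τ), and if moreover λ ≤ 1/π then (π/2)·∫₀^λ dτ/(1−2τ) > (1/2)·arcsin(πλ). -/
/-!
Both integrals equal `(1/2) log ((1 - 2r)/(1 - 2s))`, because `1 - 2λ = (1 - 2s)/(1 - 2r)`.
For the inequality, `g = logArcsinGap` vanishes at `0` and has derivative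
`π/(1 - 2t) - π/√(1 - π²t²)`, which is positive before `t₀ = 4/(4 + π²)` and negative after it.
So `g > 0` on `(0, t₀]` by monotonicity from `0`, and on `[t₀, 1/π]` by antitonicity down to
`g (1/π) = (π/2)(-log (1 - 2/π) - 1)`, which is positive since `e (π - 2) < π`.
-/

open Real Set

theorem integral_one_div_sub_mul {a b c d : ℝ} (hc : c ≠ 0) (ha : 0 < d - c * a)
    (hb : 0 < d - c * b) :
    ∫ τ in a..b, 1 / (d - c * τ) = c⁻¹ * log ((d - c * a) / (d - c * b)) := by
  rw [intervalIntegral.integral_comp_sub_mul (fun x => 1 / x) hc, integral_one_div_of_pos hb ha,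
    smul_eq_mul]

theorem integral_one_div_one_sub_two_mul {a b : ℝ} (ha : a < 1 / 2) (hb : b < 1 / 2) :
    ∫ τ in a..b, 1 / (1 - 2 * τ) = 1 / 2 * log ((1 - 2 * a) / (1 - 2 * b)) := by
  rw [integral_one_div_sub_mul two_ne_zero (by linarith) (by linarith), one_div]

theorem lt_half_of_pi_mul_lt_one {t : ℝ} (h : π * t < 1) : t < 1 / 2 := by
  nlinarith [pi_gt_three]

theorem inv_pi_lt_half : π⁻¹ < 1 / 2 := by
  rw [inv_lt_comm₀ pi_pos (by norm_num)]
  linarith [pi_gt_three]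

theorem pi_mul_mem_Ioo_of_mem_Ioo {t : ℝ} (ht : t ∈ Ioo 0 π⁻¹) : π * t ∈ Ioo (-1) 1 := by
  have := mul_lt_mul_of_pos_left ht.2 pi_pos
  rw [mul_inv_cancel₀ pi_ne_zero] at this
  exact ⟨by nlinarith [pi_pos, ht.1], this⟩

theorem four_div_four_add_pi_sq_lt_inv_pi : 4 / (4 + π ^ 2) < π⁻¹ := by
  rw [div_lt_iff₀ (by positivity), inv_mul_eq_div, lt_div_iff₀ pi_pos]
  nlinarith [pi_gt_three]

noncomputable def logArcsinGap (t : ℝ) : ℝ :=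
  π / 2 * -log (1 - 2 * t) - arcsin (π * t)

noncomputable def logArcsinGap' (t : ℝ) : ℝ :=
  π / (1 - 2 * t) - π / √(1 - (π * t) ^ 2)

theorem logArcsinGap_zero : logArcsinGap 0 = 0 := by
  simp [logArcsinGap]

theorem continuousOn_logArcsinGap : ContinuousOn logArcsinGap (Iio (1 / 2)) := by
  refine ContinuousOn.sub ?_ (by fun_prop)
  refine (ContinuousOn.log (by fun_prop) fun t (ht : t < 1 / 2) => ?_).neg.const_smul (π / 2)
  linarith

theorem hasDerivAt_logArcsinGap {t : ℝ} (h₁ : -1 < π * t) (h₂ : π * t < 1) :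
    HasDerivAt logArcsinGap (logArcsinGap' t) t := by
  have hlog := (((hasDerivAt_id' t).const_mul 2).const_sub 1).log
    (by linarith [lt_half_of_pi_mul_lt_one h₂])
  have harcsin := (hasDerivAt_arcsin h₁.ne' h₂.ne).comp t ((hasDerivAt_id' t).const_mul π)
  rw [logArcsinGap']
  refine ((hlog.neg.const_mul (π / 2)).sub harcsin).congr_deriv ?_
  field_simp

theorem one_sub_two_mul_sq_sub (c t : ℝ) :
    (1 - 2 * t) ^ 2 - (1 - (c * t) ^ 2) = t * ((4 + c ^ 2) * t - 4) := by
  ring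

theorem logArcsinGap'_pos {t : ℝ} (ht₀ : 0 < t) (ht : (4 + π ^ 2) * t < 4) :
    0 < logArcsinGap' t := by
  have hπ : 8 < 4 + π ^ 2 := by nlinarith [pi_gt_three]
  have hpos : 0 < 1 - 2 * t := by nlinarith
  have hsq : (1 - 2 * t) ^ 2 < 1 - (π * t) ^ 2 := by
    nlinarith [one_sub_two_mul_sq_sub π t, mul_pos ht₀ (sub_pos.2 ht)]
  rw [logArcsinGap', sub_pos]
  exact div_lt_div_of_pos_left pi_pos hpos ((lt_sqrt hpos.le).2 hsq)

theorem logArcsinGap'_neg {t : ℝ} (ht : 4 < (4 + π ^ 2) * t) (hπt : π * t < 1) :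
    logArcsinGap' t < 0 := by
  have ht₀ : 0 < t := by nlinarith [sq_nonneg π]
  have hpos : 0 < 1 - 2 * t := by linarith [lt_half_of_pi_mul_lt_one hπt]
  have hsq : 1 - (π * t) ^ 2 < (1 - 2 * t) ^ 2 := by
    nlinarith [one_sub_two_mul_sq_sub π t, mul_pos ht₀ (sub_pos.2 ht)]
  have hroot : 0 < √(1 - (π * t) ^ 2) := sqrt_pos.2 (by nlinarith [mul_pos pi_pos ht₀])
  rw [logArcsinGap', sub_neg]
  exact div_lt_div_of_pos_left pi_pos hroot ((sqrt_lt' hpos).2 hsq)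

theorem logArcsinGap_inv_pi_pos : 0 < logArcsinGap π⁻¹ := by
  have hlog : log (1 - 2 * π⁻¹) < -1 := by
    have hpos : 0 < 1 - 2 * π⁻¹ := by
      rw [sub_pos, ← div_eq_mul_inv, div_lt_one pi_pos]; linarith [pi_gt_three]
    rw [log_lt_iff_lt_exp hpos, exp_neg, ← div_eq_mul_inv,
      show 1 - 2 / π = (π - 2) / π by field_simp, div_lt_iff₀ pi_pos, ← div_eq_inv_mul,
      lt_div_iff₀ (exp_pos 1)]
    nlinarith [pi_gt_d2, pi_lt_d2, exp_one_lt_d9]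
  rw [logArcsinGap, mul_inv_cancel₀ pi_ne_zero, arcsin_one]
  nlinarith [pi_pos]

theorem strictMonoOn_logArcsinGap : StrictMonoOn logArcsinGap (Icc 0 (4 / (4 + π ^ 2))) := by
  refine strictMonoOn_of_hasDerivWithinAt_pos (f' := logArcsinGap') (convex_Icc _ _)
    (continuousOn_logArcsinGap.mono fun t ht => ?_) (fun t ht => ?_) fun t ht => ?_
  · exact ht.2.trans_lt (four_div_four_add_pi_sq_lt_inv_pi.trans inv_pi_lt_half)
  all_goals rw [interior_Icc] at ht
  · have hπt := pi_mul_mem_Ioo_of_mem_Ioo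
      ⟨ht.1, ht.2.trans four_div_four_add_pi_sq_lt_inv_pi⟩
    exact (hasDerivAt_logArcsinGap hπt.1 hπt.2).hasDerivWithinAt
  · exact logArcsinGap'_pos ht.1 ((lt_div_iff₀' (by positivity)).1 ht.2)

theorem strictAntiOn_logArcsinGap : StrictAntiOn logArcsinGap (Icc (4 / (4 + π ^ 2)) π⁻¹) := by
  refine strictAntiOn_of_hasDerivWithinAt_neg (f' := logArcsinGap') (convex_Icc _ _)
    (continuousOn_logArcsinGap.mono fun t ht => ?_) (fun t ht => ?_) fun t ht => ?_
  · exact ht.2.trans_lt inv_pi_lt_half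
  all_goals rw [interior_Icc] at ht
  all_goals have hπt := pi_mul_mem_Ioo_of_mem_Ioo ⟨(by positivity : (0 : ℝ) < _).trans ht.1, ht.2⟩
  · exact (hasDerivAt_logArcsinGap hπt.1 hπt.2).hasDerivWithinAt
  · exact logArcsinGap'_neg ((div_lt_iff₀' (by positivity)).1 ht.1) hπt.2

theorem logArcsinGap_pos {t : ℝ} (ht₀ : 0 < t) (ht : t ≤ π⁻¹) : 0 < logArcsinGap t := by
  rcases le_or_gt t (4 / (4 + π ^ 2)) with ht' | ht'
  · rw [← logArcsinGap_zero]
    exact strictMonoOn_logArcsinGap ⟨le_rfl, by positivity⟩ ⟨ht₀.le, ht'⟩ ht₀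
  · exact logArcsinGap_inv_pi_pos.trans_le <| strictAntiOn_logArcsinGap.antitoneOn
      ⟨ht'.le, ht⟩ ⟨four_div_four_add_pi_sq_lt_inv_pi.le, le_rfl⟩ ht

theorem affine_case_integral_eq_and_gt_arcsin_general (r s : ℝ) (hrs : r < s)
    (hs : s < 1/2) :
    (Real.pi/2) * (∫ τ in r..s, 1/(1 - 2*τ)) =
        (Real.pi/2) * (∫ τ in (0:ℝ)..((s - r)/(1 - 2*r)), 1/(1 - 2*τ)) ∧
      ((s - r)/(1 - 2*r) ≤ 1/Real.pi →
        (Real.pi/2) * (∫ τ in (0:ℝ)..((s - r)/(1 - 2*r)), 1/(1 - 2*τ)) >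
          (1/2) * Real.arcsin (Real.pi * ((s - r)/(1 - 2*r)))) := by
  have hr' : 0 < 1 - 2 * r := by linarith
  set l := (s - r) / (1 - 2 * r)
  have hl₀ : 0 < l := div_pos (by linarith) hr'
  have hl : l < 1 / 2 := by rw [div_lt_iff₀ hr']; linarith
  have hl_sub : 1 - 2 * l = (1 - 2 * s) / (1 - 2 * r) := by
    simp only [l]; field_simp; ring
  rw [integral_one_div_one_sub_two_mul (by linarith) hs,
    integral_one_div_one_sub_two_mul (by norm_num) hl, hl_sub, mul_zero, sub_zero, one_div_div]
  refine ⟨rfl, fun hlπ => ?_⟩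
  have := logArcsinGap_pos hl₀ (by rwa [← one_div])
  rw [logArcsinGap, hl_sub, ← log_inv, inv_div] at this
  linarith

theorem affine_case_integral_eq_and_gt_arcsin (r s : ℝ) (hr : 0 ≤ r) (hrs : r < s)
    (hs : s < 1/2) :
    (Real.pi/2) * (∫ τ in r..s, 1/(1 - 2*τ)) =
        (Real.pi/2) * (∫ τ in (0:ℝ)..((s - r)/(1 - 2*r)), 1/(1 - 2*τ)) ∧
      ((s - r)/(1 - 2*r) ≤ 1/Real.pi →
        (Real.pi/2) * (∫ τ in (0:ℝ)..((s - r)/(1 - 2*r)), 1/(1 - 2*τ)) >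
          (1/2) * Real.arcsin (Real.pi * ((s - r)/(1 - 2*r)))) :=
  affine_case_integral_eq_and_gt_arcsin_general r s hrs hs
end

section
/- There exists a unique real number c ∈ (0, √3/2) such that ∫₀^c dτ/(2 − √(1+4τ²)) = 1, and this number satisfies 0.6759893 < c < 0.6759894. -/
/-!
Since `1 / (2 - √(1 + 4τ²)) = (2 + √(1 + 4τ²)) / (3 - 4τ²)`, the integrand has the elementary
antiderivative `G c = (log (√(3 + 12c²) + 4c) - log (√3 - 2c)) / √3 - arsinh (2c) / 2` on
`|c| < √3 / 2`, with `G 0 = 0` and `G' > 0`. So the integral equation reads `G c = 1`, which has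
exactly one solution by the intermediate value theorem and strict monotonicity, and the decimal
bounds follow from `G 0.6759893 < 1 < G 0.6759894`. These two inequalities are certified by
rational bounds on the square roots and by the Mercator series for `log (1 - x)`, after dividing
the argument of each logarithm by a power of two.
-/

open Real Set

noncomputable def offDiagAntideriv (c : ℝ) : ℝ :=
  (log (√(3 + 12 * c ^ 2) + 4 * c) - log (√3 - 2 * c)) / √3 - arsinh (2 * c) / 2

lemma sq_two_mul_lt_three_iff {c : ℝ} : (2 * c) ^ 2 < 3 ↔ c ∈ Ioo (-(√3 / 2)) (√3 / 2) := by
  rw [sq_lt, Set.mem_Ioo]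
  constructor <;> rintro ⟨h₁, h₂⟩ <;> constructor <;> linarith

lemma sqrt_one_add_four_mul_sq_lt_two {c : ℝ} (hc : (2 * c) ^ 2 < 3) : √(1 + 4 * c ^ 2) < 2 :=
  (sqrt_lt' two_pos).mpr (by nlinarith)

lemma sqrt_add_four_mul_pos {c : ℝ} (hc : (2 * c) ^ 2 < 3) : 0 < √(3 + 12 * c ^ 2) + 4 * c := by
  have := (sq_lt.mp (show (4 * c) ^ 2 < 3 + 12 * c ^ 2 by nlinarith)).1
  linarith

lemma hasDerivAt_offDiagAntideriv {c : ℝ} (hc : (2 * c) ^ 2 < 3) :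
    HasDerivAt offDiagAntideriv (1 / (2 - √(1 + 4 * c ^ 2))) c := by
  have hr := sq_sqrt (show (0 : ℝ) ≤ 3 by norm_num)
  have hs := sq_sqrt (show 0 ≤ 1 + 4 * c ^ 2 by positivity)
  have hrs : √(3 + 12 * c ^ 2) = √3 * √(1 + 4 * c ^ 2) := by
    rw [← sqrt_mul (by norm_num)]; ring_nf
  set r := √3
  set u := √(3 + 12 * c ^ 2) with hu_def
  set s := √(1 + 4 * c ^ 2) with hs_def
  have hr_sub : 0 < r - 2 * c := sub_pos.mpr (sq_lt.mp hc).2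
  have hu_add : 0 < u + 4 * c := sqrt_add_four_mul_pos hc
  have hs_lt : s < 2 := sqrt_one_add_four_mul_sq_lt_two hc
  have hu' : HasDerivAt (fun x => √(3 + 12 * x ^ 2)) (24 * c / (2 * u)) c :=
    (((hasDerivAt_pow 2 c).const_mul 12).const_add 3).sqrt (by positivity) |>.congr_deriv
      (by push_cast; ring)
  have h₁ := (hu'.add ((hasDerivAt_id c).const_mul 4)).log hu_add.ne'
  have h₂ := (((hasDerivAt_id c).const_mul 2).const_sub r).log hr_sub.ne'
  have h₃ := ((hasDerivAt_id c).const_mul 2).arsinh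
  refine (((h₁.sub h₂).div_const r).sub (h₃.div_const 2)).congr_deriv ?_
  simp only [Pi.add_apply, id, mul_one, smul_eq_mul, mul_pow]
  rw [show (2:ℝ) ^ 2 * c ^ 2 = 4 * c ^ 2 by ring, ← hs_def, ← hu_def, hrs]
  have : 0 < r := by positivity
  have : 0 < s := by positivity
  have : 0 < 2 - s := by linarith
  have : r * s + c * 4 ≠ 0 := by rw [← hrs]; linarith
  have : r - c * 2 ≠ 0 := by linarith
  field_simp
  linear_combination
    (-4 * r ^ 2 * s + 8 * r * s * c - 16 * r * c - 4 * s ^ 3 + 4 * s + 32 * c ^ 2) * hr - 12 * s * hs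

lemma offDiagAntideriv_zero : offDiagAntideriv 0 = 0 := by
  simp [offDiagAntideriv]

lemma continuousOn_offDiagAntideriv :
    ContinuousOn offDiagAntideriv (Ioo (-(√3 / 2)) (√3 / 2)) := fun _ hc ↦
  (hasDerivAt_offDiagAntideriv (sq_two_mul_lt_three_iff.mpr hc)).continuousAt.continuousWithinAt

lemma strictMonoOn_offDiagAntideriv :
    StrictMonoOn offDiagAntideriv (Ioo (-(√3 / 2)) (√3 / 2)) := by
  refine strictMonoOn_of_hasDerivWithinAt_pos (convex_Ioo _ _) continuousOn_offDiagAntideriv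
    (f' := fun c ↦ 1 / (2 - √(1 + 4 * c ^ 2))) (fun c hc ↦ ?_) (fun c hc ↦ ?_) <;>
    rw [interior_Ioo, ← sq_two_mul_lt_three_iff] at hc
  · exact (hasDerivAt_offDiagAntideriv hc).hasDerivWithinAt
  · exact one_div_pos.mpr (sub_pos.mpr (sqrt_one_add_four_mul_sq_lt_two hc))

lemma integral_eq_offDiagAntideriv {c : ℝ} (hc : c ∈ Ioo (-(√3 / 2)) (√3 / 2)) :
    ∫ τ in (0 : ℝ)..c, 1 / (2 - √(1 + 4 * τ ^ 2)) = offDiagAntideriv c := by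
  have hsub : uIcc 0 c ⊆ Ioo (-(√3 / 2)) (√3 / 2) :=
    (ordConnected_Ioo).uIcc_subset (sq_two_mul_lt_three_iff.mp (by norm_num)) hc
  rw [intervalIntegral.integral_eq_sub_of_hasDerivAt (f := offDiagAntideriv),
    offDiagAntideriv_zero, sub_zero]
  · exact fun τ hτ ↦ hasDerivAt_offDiagAntideriv (sq_two_mul_lt_three_iff.mpr (hsub hτ))
  · refine ContinuousOn.intervalIntegrable (continuousOn_const.div (by fun_prop) fun τ hτ ↦ ?_)
    have := sqrt_one_add_four_mul_sq_lt_two (sq_two_mul_lt_three_iff.mpr (hsub hτ))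
    exact (sub_pos.mpr this).ne'

lemma log_eq_nat_mul_log_two_add_log {k : ℕ} {X : ℝ} (hX : |1 - X / 2 ^ k| < 1) :
    log X = k * log 2 + log (1 - (1 - X / 2 ^ k)) := by
  rw [← log_pow, ← log_mul (by positivity) (by linarith [le_abs_self (1 - X / 2 ^ k)])]
  congr 1
  field_simp
  ring

lemma log_le_mercator_approx (k n : ℕ) {X : ℝ} (hX : |1 - X / 2 ^ k| < 1) :
    log X ≤ k * 0.6931471808 - ∑ i ∈ Finset.range n, (1 - X / 2 ^ k) ^ (i + 1) / (i + 1)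
      + |1 - X / 2 ^ k| ^ (n + 1) / (1 - |1 - X / 2 ^ k|) := by
  have := (abs_le.mp (abs_log_sub_add_sum_range_le hX n)).2
  have := mul_le_mul_of_nonneg_left log_two_lt_d9.le (Nat.cast_nonneg (α := ℝ) k)
  linarith [log_eq_nat_mul_log_two_add_log hX]

lemma mercator_approx_le_log (k n : ℕ) {X : ℝ} (hX : |1 - X / 2 ^ k| < 1) :
    k * 0.6931471803 - ∑ i ∈ Finset.range n, (1 - X / 2 ^ k) ^ (i + 1) / (i + 1)
      - |1 - X / 2 ^ k| ^ (n + 1) / (1 - |1 - X / 2 ^ k|) ≤ log X := by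
  have := (abs_le.mp (abs_log_sub_add_sum_range_le hX n)).1
  have := mul_le_mul_of_nonneg_left log_two_gt_d9.le (Nat.cast_nonneg (α := ℝ) k)
  linarith [log_eq_nat_mul_log_two_add_log hX]

lemma offDiagAntideriv_eq_log_div {c : ℝ} (hc : (2 * c) ^ 2 < 3) :
    offDiagAntideriv c = log ((√(3 + 12 * c ^ 2) + 4 * c) / (√3 - 2 * c)) / √3
      - log (2 * c + √(1 + 4 * c ^ 2)) / 2 := by
  have hr := (sq_lt.mp hc).2
  rw [offDiagAntideriv, log_div (sqrt_add_four_mul_pos hc).ne' (by linarith), arsinh, mul_pow]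
  norm_num

lemma one_le_sqrt_add_four_mul_div_sqrt_sub {c : ℝ} (hc₀ : 0 ≤ c) (hc : 2 * c < √3) :
    1 ≤ (√(3 + 12 * c ^ 2) + 4 * c) / (√3 - 2 * c) := by
  rw [one_le_div (by linarith)]
  have := sqrt_le_sqrt (show (3 : ℝ) ≤ 3 + 12 * c ^ 2 by nlinarith)
  linarith

lemma offDiagAntideriv_le {c r₀ u₁ s₀ : ℝ} (hc : 0 ≤ c) (hcr₀ : 2 * c < r₀) (hr₀ : r₀ ≤ √3)
    (hu₁ : √(3 + 12 * c ^ 2) ≤ u₁) (hs₀ : 0 < s₀) (hs₀' : s₀ ≤ √(1 + 4 * c ^ 2)) :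
    offDiagAntideriv c ≤ log ((u₁ + 4 * c) / (r₀ - 2 * c)) / r₀ - log (2 * c + s₀) / 2 := by
  have hc3 : 2 * c < √3 := hcr₀.trans_le hr₀
  have hc' : (2 * c) ^ 2 < 3 := sq_lt.mpr ⟨by linarith [sqrt_nonneg 3], hc3⟩
  rw [offDiagAntideriv_eq_log_div hc']
  refine sub_le_sub ?_ (by gcongr)
  calc log ((√(3 + 12 * c ^ 2) + 4 * c) / (√3 - 2 * c)) / √3
      ≤ log ((√(3 + 12 * c ^ 2) + 4 * c) / (√3 - 2 * c)) / r₀ := by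
        gcongr
        · exact log_nonneg (one_le_sqrt_add_four_mul_div_sqrt_sub hc hc3)
        · linarith
    _ ≤ log ((u₁ + 4 * c) / (r₀ - 2 * c)) / r₀ := by
        gcongr
        · linarith
        · linarith [sqrt_nonneg (3 + 12 * c ^ 2)]

lemma le_offDiagAntideriv {c r₁ u₀ s₁ : ℝ} (hc : 0 ≤ c) (hc3 : 2 * c < √3) (hr₁ : √3 ≤ r₁)
    (hu₀ : 0 < u₀) (hu₀' : u₀ ≤ √(3 + 12 * c ^ 2)) (hs₁ : √(1 + 4 * c ^ 2) ≤ s₁) :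
    log ((u₀ + 4 * c) / (r₁ - 2 * c)) / r₁ - log (2 * c + s₁) / 2 ≤ offDiagAntideriv c := by
  have hc' : (2 * c) ^ 2 < 3 := sq_lt.mpr ⟨by linarith [sqrt_nonneg 3], hc3⟩
  rw [offDiagAntideriv_eq_log_div hc']
  refine sub_le_sub ?_ (by gcongr)
  calc log ((u₀ + 4 * c) / (r₁ - 2 * c)) / r₁
      ≤ log ((√(3 + 12 * c ^ 2) + 4 * c) / (√3 - 2 * c)) / r₁ := by
        gcongr
        · linarith [sqrt_nonneg 3]
        · exact div_pos (by linarith) (by linarith)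
    _ ≤ log ((√(3 + 12 * c ^ 2) + 4 * c) / (√3 - 2 * c)) / √3 := by
        gcongr
        exact log_nonneg (one_le_sqrt_add_four_mul_div_sqrt_sub hc hc3)

lemma offDiagAntideriv_lt_one : offDiagAntideriv 0.6759893 < 1 := by
  have hr₀ : (1.7320508075 : ℝ) ≤ √3 := le_sqrt_of_sq_le (by norm_num)
  have hu₁ : √(3 + 12 * (0.6759893 : ℝ) ^ 2) ≤ 2.912651439 :=
    (sqrt_le_left (by norm_num)).mpr (by norm_num)
  have hs₀ : (1.6816200923 : ℝ) ≤ √(1 + 4 * 0.6759893 ^ 2) := le_sqrt_of_sq_le (by norm_num)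
  have hP := log_le_mercator_approx 4 7
    (X := (2.912651439 + 4 * 0.6759893) / (1.7320508075 - 2 * 0.6759893)) (by norm_num)
  have hC := mercator_approx_le_log 2 12 (X := 2 * 0.6759893 + 1.6816200923) (by norm_num)
  refine (offDiagAntideriv_le (by norm_num) (by norm_num) hr₀ hu₁ (by norm_num) hs₀).trans_lt ?_
  refine (sub_le_sub (div_le_div_of_nonneg_right hP (by norm_num))
    (div_le_div_of_nonneg_right hC zero_le_two)).trans_lt ?_
  norm_num [Finset.sum_range_succ]

lemma one_lt_offDiagAntideriv : 1 < offDiagAntideriv 0.6759894 := by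
  have hr₁ : √3 ≤ (1.7320508076 : ℝ) := (sqrt_le_left (by norm_num)).mpr (by norm_num)
  have hu₀ : (2.9126517174 : ℝ) ≤ √(3 + 12 * 0.6759894 ^ 2) := le_sqrt_of_sq_le (by norm_num)
  have hs₁ : √(1 + 4 * (0.6759894 : ℝ) ^ 2) ≤ 1.6816202532 :=
    (sqrt_le_left (by norm_num)).mpr (by norm_num)
  have hc3 : 2 * (0.6759894 : ℝ) < √3 := lt_sqrt_of_sq_lt (by norm_num)
  have hP := mercator_approx_le_log 4 7
    (X := (2.9126517174 + 4 * 0.6759894) / (1.7320508076 - 2 * 0.6759894)) (by norm_num)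
  have hC := log_le_mercator_approx 2 12 (X := 2 * 0.6759894 + 1.6816202532) (by norm_num)
  refine lt_of_lt_of_le ?_ (le_offDiagAntideriv (by norm_num) hc3 hr₁ (by norm_num) hu₀ hs₁)
  refine lt_of_lt_of_le ?_ (sub_le_sub (div_le_div_of_nonneg_right hP (by norm_num))
    (div_le_div_of_nonneg_right hC zero_le_two))
  norm_num [Finset.sum_range_succ]

theorem exists_unique_c_off :
    (∃! c : ℝ, c ∈ Set.Ioo 0 (Real.sqrt 3 / 2) ∧
      (∫ τ in (0:ℝ)..c, 1/(2 - Real.sqrt (1 + 4*τ^2))) = 1) ∧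
    ∀ c : ℝ, c ∈ Set.Ioo 0 (Real.sqrt 3 / 2) →
      (∫ τ in (0:ℝ)..c, 1/(2 - Real.sqrt (1 + 4*τ^2))) = 1 →
        0.6759893 < c ∧ c < 0.6759894 := by
  have hsub : Ioo 0 (√3 / 2) ⊆ Ioo (-(√3 / 2)) (√3 / 2) :=
    Ioo_subset_Ioo_left (by linarith [sqrt_nonneg 3])
  have hb : (0.6759894 : ℝ) ∈ Ioo 0 (√3 / 2) :=
    ⟨by norm_num, by linarith [lt_sqrt_of_sq_lt (show (2 * 0.6759894 : ℝ) ^ 2 < 3 by norm_num)]⟩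
  have hab : Icc (0.6759893 : ℝ) 0.6759894 ⊆ Ioo 0 (√3 / 2) :=
    Icc_subset_Ioo (by norm_num) hb.2
  obtain ⟨c, hc, hc_eq⟩ := intermediate_value_Ioo (by norm_num)
    (continuousOn_offDiagAntideriv.mono (hab.trans hsub))
    ⟨offDiagAntideriv_lt_one, one_lt_offDiagAntideriv⟩
  have hcI : c ∈ Ioo 0 (√3 / 2) := hab (Ioo_subset_Icc_self hc)
  have hmono := strictMonoOn_offDiagAntideriv
  refine ⟨⟨c, ⟨hcI, (integral_eq_offDiagAntideriv (hsub hcI)).trans hc_eq⟩, ?_⟩, ?_⟩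
  · rintro d ⟨hd, hd_eq⟩
    rw [integral_eq_offDiagAntideriv (hsub hd)] at hd_eq
    exact hmono.injOn (hsub hd) (hsub hcI) (hd_eq.trans hc_eq.symm)
  · intro d hd hd_eq
    rw [integral_eq_offDiagAntideriv (hsub hd)] at hd_eq
    constructor
    · exact (hmono.lt_iff_lt (hsub (hab (left_mem_Icc.mpr (by norm_num)))) (hsub hd)).mp
        (hd_eq ▸ offDiagAntideriv_lt_one)
    · exact (hmono.lt_iff_lt (hsub hd) (hsub hb)).mp (hd_eq ▸ one_lt_offDiagAntideriv)
end

section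
/- Let λ := (1/π)·sin((3π−2)/12), let τ₁ be the unique number in (0, √3/2) with (π/2)·∫₀^{τ₁} dτ/(2−√(1+4τ²)) = 1/3, and define recursively τ_{j+1} := τ_j + λ·(2 − √(1+4τ_j²)) for j = 1, 2, 3, 4. Then τ₂ > 0.3757396, τ₃ > 0.5140409, τ₄ > 0.6184976, and τ₅ > 0.6940725. -/
/-!
The constant `λ` is bounded below through an alternating Taylor sum for `sin`, and `τ₁` through
the polynomial majorant `1 + 2t² + 2t⁴ + 4t⁶ + 2t⁸ + 12t¹⁰` of the integrand: if `τ₁` were too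
small, the integral would fall short of `2 / (3π)`. For `0 ≤ λ ≤ 1/2` the step
`τ ↦ τ + λ (2 - √(1 + 4τ²))` is monotone, because `√(1 + 4τ²)` is `2`-Lipschitz, so each lower
bound `τⱼ > a` gives `τⱼ₊₁ > a + λ (2 - c)` for any rational `c ≥ √(1 + 4a²)`.
-/

open MeasureTheory Real

open Finset Nat in
theorem Real.sum_range_sin_taylor_le_sin {x : ℝ} (hx₀ : 0 ≤ x) (hx : x ^ 2 ≤ 6) (k : ℕ) :
    ∑ i ∈ range (2 * k), (-1) ^ i * (x ^ (2 * i + 1) / (2 * i + 1)!) ≤ sin x := by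
  refine Antitone.alternating_series_le_tendsto ?_ (antitone_nat_of_succ_le fun n ↦ ?_) k
  · simpa only [mul_div_assoc] using (hasSum_sin x).tendsto_sum_nat
  · have hfac : ((2 * (n + 1) + 1)! : ℝ) = (2 * n + 3) * (2 * n + 2) * (2 * n + 1)! := by
      rw [show 2 * (n + 1) + 1 = (2 * n + 1) + 1 + 1 by ring, factorial_succ, factorial_succ]
      push_cast
      ring
    have hn : x ^ 2 ≤ (2 * n + 3) * (2 * n + 2) := by nlinarith [(n.cast_nonneg : (0 : ℝ) ≤ n)]
    have hpow := pow_nonneg hx₀ (2 * n + 1)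
    have hfac_pos : (0 : ℝ) < (2 * n + 1)! := mod_cast factorial_pos _
    rw [hfac, show 2 * (n + 1) + 1 = 2 * n + 1 + 2 by ring, pow_add,
      div_le_div_iff₀ (by positivity) hfac_pos]
    nlinarith [mul_le_mul_of_nonneg_left hn (mul_nonneg hfac_pos.le hpow)]

theorem one_div_pi_mul_sin_gt : (0.18462046 : ℝ) < 1 / π * sin ((3 * π - 2) / 12) := by
  have hπ := pi_gt_d20
  have hπ' := pi_lt_d20
  have hsin : sin 0.6187314967 ≤ sin ((3 * π - 2) / 12) :=
    sin_le_sin_of_le_of_le_pi_div_two (by linarith) (by linarith) (by linarith)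
  have htaylor := sum_range_sin_taylor_le_sin (x := 0.6187314967) (by norm_num) (by norm_num) 3
  norm_num [Finset.sum_range_succ, Nat.factorial] at htaylor
  rw [one_div_mul_eq_div, lt_div_iff₀ pi_pos]
  linarith

theorem one_div_pi_mul_sin_le_half : 1 / π * sin ((3 * π - 2) / 12) ≤ 1 / 2 := by
  rw [one_div_mul_eq_div, div_le_iff₀ pi_pos]
  linarith [sin_le_one ((3 * π - 2) / 12), pi_gt_three]

theorem sqrt_one_add_four_mul_sq_le {a b : ℝ} (hab : a ≤ b) :
    √(1 + 4 * b ^ 2) ≤ √(1 + 4 * a ^ 2) + 2 * (b - a) := by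
  have hsq := sq_sqrt (by positivity : (0 : ℝ) ≤ 1 + 4 * a ^ 2)
  have h2a : 2 * a ≤ √(1 + 4 * a ^ 2) := le_sqrt_of_sq_le (by linarith)
  rw [sqrt_le_left (by linarith [sqrt_nonneg (1 + 4 * a ^ 2)])]
  nlinarith

theorem two_sub_sqrt_one_add_four_mul_sq_pos {t : ℝ} (ht : t ^ 2 < 3 / 4) :
    0 < 2 - √(1 + 4 * t ^ 2) := by
  rw [sub_pos, sqrt_lt' two_pos]
  linarith

/-- The majorant is the Taylor polynomial of the left-hand side at `0`; the next coefficient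
is `-12`, and indeed `(2q - 1)² - (1 + 4t²) q² = t¹² (24 - 96t² + ⋯)`. -/
theorem one_div_two_sub_sqrt_le {t : ℝ} (ht : t ^ 2 ≤ 1 / 5) :
    1 / (2 - √(1 + 4 * t ^ 2)) ≤
      1 + 2 * t ^ 2 + 2 * t ^ 4 + 4 * t ^ 6 + 2 * t ^ 8 + 12 * t ^ 10 := by
  set q := 1 + 2 * t ^ 2 + 2 * t ^ 4 + 4 * t ^ 6 + 2 * t ^ 8 + 12 * t ^ 10
  have hq : 1 ≤ q := by
    have : 0 ≤ 2 * t ^ 2 + 2 * t ^ 4 + 4 * t ^ 6 + 2 * t ^ 8 + 12 * t ^ 10 := by positivity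
    linarith
  have hu : 0 ≤ t ^ 2 := sq_nonneg t
  have hR : 0 ≤ 24 - 96 * t ^ 2 + 44 * t ^ 4 - 256 * t ^ 6 + 240 * t ^ 8 - 576 * t ^ 10 := by
    nlinarith [pow_le_pow_left₀ hu ht 3, pow_le_pow_left₀ hu ht 5, pow_nonneg hu 2,
      pow_nonneg hu 4]
  have hdiff : (2 * q - 1) ^ 2 - (1 + 4 * t ^ 2) * q ^ 2 =
      t ^ 12 * (24 - 96 * t ^ 2 + 44 * t ^ 4 - 256 * t ^ 6 + 240 * t ^ 8 - 576 * t ^ 10) := by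
    simp only [q]
    ring
  have hsqrt : √(1 + 4 * t ^ 2) * q ≤ 2 * q - 1 := by
    refine le_of_pow_le_pow_left₀ two_ne_zero (by linarith) ?_
    rw [mul_pow, sq_sqrt (by positivity)]
    nlinarith [mul_nonneg (pow_nonneg hu 6) hR]
  rw [div_le_iff₀ (two_sub_sqrt_one_add_four_mul_sq_pos (by linarith))]
  linarith

theorem integral_one_div_two_sub_sqrt_le {x : ℝ} (hx₀ : 0 ≤ x) (hx : x ^ 2 ≤ 1 / 5) :
    ∫ t in (0 : ℝ)..x, 1 / (2 - √(1 + 4 * t ^ 2)) ≤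
      x + 2 * x ^ 3 / 3 + 2 * x ^ 5 / 5 + 4 * x ^ 7 / 7 + 2 * x ^ 9 / 9 + 12 * x ^ 11 / 11 := by
  have hsq : ∀ t ∈ Set.Icc 0 x, t ^ 2 ≤ 1 / 5 := fun t ht ↦ by nlinarith [ht.1, ht.2]
  have hint : IntervalIntegrable (fun t : ℝ ↦ 1 / (2 - √(1 + 4 * t ^ 2))) volume 0 x := by
    refine ContinuousOn.intervalIntegrable ?_
    rw [Set.uIcc_of_le hx₀]
    exact continuousOn_const.div (by fun_prop) fun t ht ↦
      (two_sub_sqrt_one_add_four_mul_sq_pos (by linarith [hsq t ht])).ne'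
  calc _ ≤ ∫ t in (0 : ℝ)..x, (1 + 2 * t ^ 2 + 2 * t ^ 4 + 4 * t ^ 6 + 2 * t ^ 8 + 12 * t ^ 10) :=
        intervalIntegral.integral_mono_on hx₀ hint
          (Continuous.intervalIntegrable (by fun_prop) _ _) fun t ht ↦
            one_div_two_sub_sqrt_le (hsq t ht)
    _ = _ := by
      simp (disch := exact Continuous.intervalIntegrable (by fun_prop) _ _) only
        [intervalIntegral.integral_add, intervalIntegral.integral_const_mul, integral_pow,
          integral_one]
      ring

theorem gt_of_pi_div_two_mul_integral_eq {τ : ℝ} (hτ : 0 ≤ τ)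
    (h : π / 2 * ∫ t in (0 : ℝ)..τ, 1 / (2 - √(1 + 4 * t ^ 2)) = 1 / 3) :
    (0.206203 : ℝ) < τ := by
  by_contra! hle
  have hQ : τ + 2 * τ ^ 3 / 3 + 2 * τ ^ 5 / 5 + 4 * τ ^ 7 / 7 + 2 * τ ^ 9 / 9 +
      12 * τ ^ 11 / 11 ≤ 0.2122065 :=
    calc _ ≤ (0.206203 : ℝ) + 2 * 0.206203 ^ 3 / 3 + 2 * 0.206203 ^ 5 / 5 + 4 * 0.206203 ^ 7 / 7 +
          2 * 0.206203 ^ 9 / 9 + 12 * 0.206203 ^ 11 / 11 := by gcongr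
      _ ≤ 0.2122065 := by norm_num
  have hI := (integral_one_div_two_sub_sqrt_le hτ (by nlinarith)).trans hQ
  have := mul_le_mul_of_nonneg_left hI (by positivity : 0 ≤ π / 2)
  linarith [pi_lt_d6]

noncomputable def supportStep (lam τ : ℝ) : ℝ := τ + lam * (2 - √(1 + 4 * τ ^ 2))

theorem supportStep_monotone {lam : ℝ} (h₀ : 0 ≤ lam) (h : lam ≤ 1 / 2) :
    Monotone (supportStep lam) := fun a b hab ↦ by
  have := mul_le_mul_of_nonneg_left (sqrt_one_add_four_mul_sq_le hab) h₀
  simp only [supportStep]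
  nlinarith

theorem lt_supportStep {lam a b c t : ℝ} (h₀ : 0 ≤ lam) (h : lam ≤ 1 / 2) (hc₀ : 0 ≤ c)
    (hc : 1 + 4 * a ^ 2 ≤ c ^ 2) (hb : b < a + lam * (2 - c)) (hat : a ≤ t) :
    b < supportStep lam t :=
  calc b < a + lam * (2 - c) := hb
    _ ≤ supportStep lam a := by
      unfold supportStep
      gcongr
      exact (sqrt_le_left hc₀).2 hc
    _ ≤ supportStep lam t := supportStep_monotone h₀ h hat

theorem supporting_points_lower_bounds (lam τ₁ τ₂ τ₃ τ₄ τ₅ : ℝ)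
    (hlam : lam = (1/Real.pi) * Real.sin ((3*Real.pi - 2)/12))
    (hτ₁ : τ₁ ∈ Set.Ioo 0 (Real.sqrt 3 / 2))
    (hint : (Real.pi/2) * (∫ τ in (0:ℝ)..τ₁, 1/(2 - Real.sqrt (1 + 4*τ^2))) = 1/3)
    (h2 : τ₂ = τ₁ + lam * (2 - Real.sqrt (1 + 4*τ₁^2)))
    (h3 : τ₃ = τ₂ + lam * (2 - Real.sqrt (1 + 4*τ₂^2)))
    (h4 : τ₄ = τ₃ + lam * (2 - Real.sqrt (1 + 4*τ₃^2)))
    (h5 : τ₅ = τ₄ + lam * (2 - Real.sqrt (1 + 4*τ₄^2))) :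
    τ₂ > 0.3757396 ∧ τ₃ > 0.5140409 ∧ τ₄ > 0.6184976 ∧ τ₅ > 0.6940725 := by
  have hlam_gt : 0.18462046 < lam := hlam ▸ one_div_pi_mul_sin_gt
  have hlam₀ : 0 ≤ lam := by linarith
  have hlam_le : lam ≤ 1 / 2 := hlam ▸ one_div_pi_mul_sin_le_half
  have ht₁ : 0.206203 < τ₁ := gt_of_pi_div_two_mul_integral_eq hτ₁.1.le hint
  have ht₂ : 0.3757396 < τ₂ := h2 ▸ lt_supportStep (c := 1.0817018) hlam₀ hlam_le
    (by norm_num) (by norm_num) (by linarith) ht₁.le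
  have ht₃ : 0.5140409 < τ₃ := h3 ▸ lt_supportStep (c := 1.2508881) hlam₀ hlam_le
    (by norm_num) (by norm_num) (by linarith) ht₂.le
  have ht₄ : 0.6184976 < τ₄ := h4 ▸ lt_supportStep (c := 1.4342079) hlam₀ hlam_le
    (by norm_num) (by norm_num) (by linarith) ht₃.le
  have ht₅ : 0.6940725 < τ₅ := h5 ▸ lt_supportStep (c := 1.5906468) hlam₀ hlam_le
    (by norm_num) (by norm_num) (by linarith) ht₄.le
  exact ⟨ht₂, ht₃, ht₄, ht₅⟩
end
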